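/- For the inverse multi-quadric kernel k(x,y) = (c² + ‖x − y‖²)^β on ℝᵈ with c > 0 and β ∈ (−1,0), all mixed partial derivatives of the form ∂_{x}^{α} ∂_{y}^{α} k(x,y) (same multi-index α applied to x and y variables) are bounded uniformly over (x,y) ∈ ℝᵈ × ℝᵈ. -/

import Mathlib

open Real

/-- Partial derivative in the `i`-th coordinate of the first (`x`) argument. -/
noncomputable def pderivX {d : ℕ} (i : Fin d)
    (g : (Fin d → ℝ) × (Fin d → ℝ) → ℝ) : (Fin d → ℝ) × (Fin d → ℝ) → ℝ :=
  fun p => deriv (fun t => g (Function.update p.1 i t, p.2)) (p.1 i)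

/-- Partial derivative in the `i`-th coordinate of the second (`y`) argument. -/
noncomputable def pderivY {d : ℕ} (i : Fin d)
    (g : (Fin d → ℝ) × (Fin d → ℝ) → ℝ) : (Fin d → ℝ) × (Fin d → ℝ) → ℝ :=
  fun p => deriv (fun t => g (p.1, Function.update p.2 i t)) (p.2 i)

/-- The mixed derivative operator `∂_x^α ∂_y^α` for a multi-index `α`. -/
noncomputable def mixedDeriv {d : ℕ} (α : Fin d → ℕ)
    (g : (Fin d → ℝ) × (Fin d → ℝ) → ℝ) : (Fin d → ℝ) × (Fin d → ℝ) → ℝ :=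
  (List.finRange d).foldr (fun i h => (pderivX i)^[α i] ((pderivY i)^[α i] h)) g

/-!
Put `u = x - y`. On functions of `u`, each `∂_{x_i}` acts as `∂_{u_i}` and each `∂_{y_i}` as
`-∂_{u_i}`. For `Q = c² + ∑ⱼ uⱼ²`,
`∂_{u_i} (uⁿ Q^γ) = nᵢ u^{n - eᵢ} Q^γ + 2γ u^{n + eᵢ} Q^{γ - 1}`,
so no derivative raises the degree `|n| + 2γ`; the kernel `Q^β` has degree `2β ≤ 0`. Since
`c ≤ √Q` and `|uⱼ| ≤ √Q`, a monomial of degree `δ ≤ 0` is bounded by `√Q^δ ≤ c^δ`.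
-/

open Function Finset

theorem sum_update_add_apply_self {ι M : Type*} [Fintype ι] [DecidableEq ι] [AddCommMonoid M]
    (f : ι → M) (i : ι) (b : M) : ∑ j, update f i b j + f i = b + ∑ j, f j := by
  rw [sum_update_of_mem (mem_univ i), sum_eq_add_sum_sdiff_singleton_of_mem (mem_univ i) f]
  abel

variable {d : ℕ} {c : ℝ}

noncomputable def imqMonomial (c : ℝ) (n : Fin d → ℕ) (γ : ℝ) (u : Fin d → ℝ) : ℝ :=
  (∏ j, u j ^ n j) * (c ^ 2 + ∑ j, u j ^ 2) ^ γ

theorem imqMonomial_update_update (n : Fin d → ℕ) (γ : ℝ) (u : Fin d → ℝ) (i : Fin d)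
    (m : ℕ) (s : ℝ) :
    imqMonomial c (update n i m) γ (update u i s) =
      s ^ m * (∏ j ∈ univ \ {i}, u j ^ n j) *
        (c ^ 2 + (s ^ 2 + ∑ j ∈ univ \ {i}, u j ^ 2)) ^ γ := by
  have hpow : ∀ j,
      update u i s j ^ update n i m j = update (fun j => u j ^ n j) i (s ^ m) j := by
    intro j
    simp only [update_apply]
    split_ifs <;> rfl
  simp only [imqMonomial, hpow, apply_update (fun _ (x : ℝ) => x ^ 2),
    prod_update_of_mem (mem_univ i), sum_update_of_mem (mem_univ i)]

-- For `n i = 0` the truncated `n i - 1` is harmless, as its coefficient `n i` vanishes.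
theorem hasDerivAt_imqMonomial_update (hc : 0 < c) (n : Fin d → ℕ) (γ : ℝ) (u : Fin d → ℝ)
    (i : Fin d) :
    HasDerivAt (fun s => imqMonomial c n γ (update u i s))
      (n i * imqMonomial c (update n i (n i - 1)) γ u +
        2 * γ * imqMonomial c (update n i (n i + 1)) (γ - 1) u) (u i) := by
  set P := ∏ j ∈ univ \ {i}, u j ^ n j
  set S := ∑ j ∈ univ \ {i}, u j ^ 2
  have hQ : c ^ 2 + (u i ^ 2 + S) ≠ 0 := by
    have : 0 ≤ S := sum_nonneg fun j _ => sq_nonneg (u j)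
    positivity
  have hQγ := (((hasDerivAt_pow 2 (u i)).add_const S).const_add (c ^ 2)).rpow_const
    (p := γ) (Or.inl hQ)
  have key := ((hasDerivAt_pow (n i) (u i)).mul_const P).mul hQγ
  have hf : (fun s => imqMonomial c n γ (update u i s)) =
      fun s => s ^ n i * P * (c ^ 2 + (s ^ 2 + S)) ^ γ := by
    funext s
    have := imqMonomial_update_update (c := c) n γ u i (n i) s
    rwa [update_eq_self] at this
  have hg : ∀ m γ',
      imqMonomial c (update n i m) γ' u = u i ^ m * P * (c ^ 2 + (u i ^ 2 + S)) ^ γ' :=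
    fun m γ' => by
      have := imqMonomial_update_update (c := c) n γ' u i m (u i)
      rwa [update_eq_self] at this
  rw [hf, hg, hg]
  refine key.congr_deriv ?_
  simp only [Nat.cast_ofNat, Nat.add_one_sub_one, pow_one]
  ring

def imqDegree (n : Fin d → ℕ) (γ : ℝ) : ℝ :=
  ((∑ j, n j : ℕ) : ℝ) + 2 * γ

theorem imqDegree_update_sub_one_le (n : Fin d → ℕ) (γ : ℝ) (i : Fin d) :
    imqDegree (update n i (n i - 1)) γ ≤ imqDegree n γ := by
  have hsum := sum_update_add_apply_self n i (n i - 1)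
  have : ∑ j, update n i (n i - 1) j ≤ ∑ j, n j := by omega
  unfold imqDegree
  gcongr

theorem imqDegree_update_add_one (n : Fin d → ℕ) (γ : ℝ) (i : Fin d) :
    imqDegree (update n i (n i + 1)) (γ - 1) = imqDegree n γ - 1 := by
  have hsum := sum_update_add_apply_self n i (n i + 1)
  have : ∑ j, update n i (n i + 1) j = ∑ j, n j + 1 := by omega
  rw [imqDegree, imqDegree, this, Nat.cast_succ]
  ring

def imqSpan (c : ℝ) : Submodule ℝ ((Fin d → ℝ) → ℝ) :=
  Submodule.span ℝ {f | ∃ n γ, imqDegree n γ ≤ 0 ∧ f = imqMonomial c n γ}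

theorem imqMonomial_mem_imqSpan {n : Fin d → ℕ} {γ : ℝ} (h : imqDegree n γ ≤ 0) :
    imqMonomial c n γ ∈ imqSpan c :=
  Submodule.subset_span ⟨n, γ, h, rfl⟩

theorem exists_hasDerivAt_update_of_mem_imqSpan (hc : 0 < c) (i : Fin d) {f : (Fin d → ℝ) → ℝ}
    (hf : f ∈ imqSpan c) :
    ∃ g ∈ imqSpan c, ∀ u, HasDerivAt (fun s => f (update u i s)) (g u) (u i) := by
  induction hf using Submodule.span_induction with
  | mem f hf =>
    obtain ⟨n, γ, hdeg, rfl⟩ := hf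
    have hdeg₁ := (imqDegree_update_sub_one_le n γ i).trans hdeg
    have hdeg₂ : imqDegree (update n i (n i + 1)) (γ - 1) ≤ 0 := by
      rw [imqDegree_update_add_one]
      linarith
    exact ⟨_, add_mem (Submodule.smul_mem _ (n i : ℝ) (imqMonomial_mem_imqSpan hdeg₁))
      (Submodule.smul_mem _ (2 * γ) (imqMonomial_mem_imqSpan hdeg₂)),
      fun u => hasDerivAt_imqMonomial_update hc n γ u i⟩
  | zero => exact ⟨0, zero_mem _, fun u => hasDerivAt_const _ _⟩
  | add f g _ _ hf hg =>
    obtain ⟨f', hf', hff'⟩ := hf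
    obtain ⟨g', hg', hgg'⟩ := hg
    exact ⟨f' + g', add_mem hf' hg', fun u => (hff' u).add (hgg' u)⟩
  | smul a f _ hf =>
    obtain ⟨f', hf', hff'⟩ := hf
    exact ⟨a • f', Submodule.smul_mem _ a hf', fun u => (hff' u).const_mul a⟩

noncomputable def partialDeriv (i : Fin d) (f : (Fin d → ℝ) → ℝ) (u : Fin d → ℝ) : ℝ :=
  deriv (fun s => f (update u i s)) (u i)

theorem partialDeriv_mem_imqSpan (hc : 0 < c) (i : Fin d) {f : (Fin d → ℝ) → ℝ}
    (hf : f ∈ imqSpan c) : partialDeriv i f ∈ imqSpan c := by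
  obtain ⟨g, hg, hfg⟩ := exists_hasDerivAt_update_of_mem_imqSpan hc i hf
  rwa [show partialDeriv i f = g from funext fun u => (hfg u).deriv]

theorem abs_imqMonomial_le (hc : 0 < c) {n : Fin d → ℕ} {γ : ℝ} (hdeg : imqDegree n γ ≤ 0)
    (u : Fin d → ℝ) : |imqMonomial c n γ u| ≤ c ^ imqDegree n γ := by
  set Q := c ^ 2 + ∑ j, u j ^ 2
  have hc2 : c ^ 2 ≤ Q := le_add_of_nonneg_right (sum_nonneg fun j _ => sq_nonneg (u j))
  have hQ : 0 ≤ Q := (sq_nonneg c).trans hc2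
  have hcr : c ≤ √Q := (Real.le_sqrt hc.le hQ).mpr hc2
  have hr : 0 < √Q := hc.trans_le hcr
  have hu : ∀ j, |u j| ≤ √Q := fun j => Real.abs_le_sqrt <|
    (single_le_sum (fun k _ => sq_nonneg (u k)) (mem_univ j)).trans
      (le_add_of_nonneg_left (sq_nonneg c))
  calc |imqMonomial c n γ u| = (∏ j, |u j| ^ n j) * Q ^ γ := by
        rw [imqMonomial, abs_mul, abs_prod, abs_of_nonneg (Real.rpow_nonneg hQ γ)]
        simp_rw [abs_pow]
    _ ≤ √Q ^ (∑ j, n j) * (√Q ^ (2 : ℕ)) ^ γ := by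
        rw [← prod_pow_eq_pow_sum, Real.sq_sqrt hQ]
        gcongr with j
        exact hu j
    _ = √Q ^ imqDegree n γ := by
        rw [imqDegree, ← Real.rpow_natCast_mul hr.le, Real.rpow_add hr, Real.rpow_natCast,
          Nat.cast_ofNat]
    _ ≤ c ^ imqDegree n γ := Real.rpow_le_rpow_of_nonpos hc hcr hdeg

theorem exists_abs_le_of_mem_imqSpan (hc : 0 < c) {f : (Fin d → ℝ) → ℝ} (hf : f ∈ imqSpan c) :
    ∃ C, ∀ u, |f u| ≤ C := by
  induction hf using Submodule.span_induction with
  | mem f hf =>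
    obtain ⟨n, γ, hdeg, rfl⟩ := hf
    exact ⟨_, abs_imqMonomial_le hc hdeg⟩
  | zero => exact ⟨0, fun u => by simp⟩
  | add f g _ _ hf hg =>
    obtain ⟨C, hC⟩ := hf
    obtain ⟨D, hD⟩ := hg
    exact ⟨C + D, fun u => (abs_add_le _ _).trans (add_le_add (hC u) (hD u))⟩
  | smul a f _ hf =>
    obtain ⟨C, hC⟩ := hf
    refine ⟨|a| * C, fun u => ?_⟩
    rw [Pi.smul_apply, smul_eq_mul, abs_mul]
    exact mul_le_mul_of_nonneg_left (hC u) (abs_nonneg a)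

theorem pderivX_comp_sub (i : Fin d) (F : (Fin d → ℝ) → ℝ) :
    pderivX i (fun p => F (p.1 - p.2)) = fun p => partialDeriv i F (p.1 - p.2) := by
  funext p
  have hshift : ∀ t, update p.1 i t - p.2 = update (p.1 - p.2) i (t - p.2 i) := fun t => by
    rw [update_sub, update_eq_self]
  simp only [pderivX, hshift]
  exact deriv_comp_sub_const (fun s => F (update (p.1 - p.2) i s)) (p.2 i) (p.1 i)

theorem pderivY_comp_sub (i : Fin d) (F : (Fin d → ℝ) → ℝ) :
    pderivY i (fun p => F (p.1 - p.2)) = fun p => -partialDeriv i F (p.1 - p.2) := by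
  funext p
  have hshift : ∀ t, p.1 - update p.2 i t = update (p.1 - p.2) i (p.1 i - t) := fun t => by
    rw [update_sub, update_eq_self]
  simp only [pderivY, hshift]
  exact deriv_comp_const_sub (fun s => F (update (p.1 - p.2) i s)) (p.1 i) (p.2 i)

theorem mapsTo_mixedDeriv {S : Set ((Fin d → ℝ) × (Fin d → ℝ) → ℝ)}
    (hX : ∀ i, Set.MapsTo (pderivX i) S S) (hY : ∀ i, Set.MapsTo (pderivY i) S S)
    (α : Fin d → ℕ) : Set.MapsTo (mixedDeriv α) S S := by
  intro g hg
  unfold mixedDeriv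
  induction List.finRange d with
  | nil => exact hg
  | cons i l ih => exact (hX i).iterate _ ((hY i).iterate _ ih)

def imqKernels (c : ℝ) : Set ((Fin d → ℝ) × (Fin d → ℝ) → ℝ) :=
  (fun F p => F (p.1 - p.2)) '' (imqSpan (d := d) c : Set ((Fin d → ℝ) → ℝ))

theorem mapsTo_pderivX_imqKernels (hc : 0 < c) (i : Fin d) :
    Set.MapsTo (pderivX i) (imqKernels c) (imqKernels c) := by
  rintro _ ⟨F, hF, rfl⟩
  exact ⟨_, partialDeriv_mem_imqSpan hc i hF, (pderivX_comp_sub i F).symm⟩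

theorem mapsTo_pderivY_imqKernels (hc : 0 < c) (i : Fin d) :
    Set.MapsTo (pderivY i) (imqKernels c) (imqKernels c) := by
  rintro _ ⟨F, hF, rfl⟩
  exact ⟨_, neg_mem (partialDeriv_mem_imqSpan hc i hF), (pderivY_comp_sub i F).symm⟩

theorem imq_mixed_derivatives_bounded_general
    {d : ℕ} (c β : ℝ) (hc : 0 < c) (hβ₂ : β < 0)
    (α : Fin d → ℕ) :
    ∃ C : ℝ, ∀ p : (Fin d → ℝ) × (Fin d → ℝ),
      |mixedDeriv α (fun q => (c ^ 2 + ∑ i, (q.1 i - q.2 i) ^ 2) ^ β) p| ≤ C := by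
  have hdeg : imqDegree (0 : Fin d → ℕ) β ≤ 0 := by
    simp only [imqDegree, Pi.zero_apply, sum_const_zero, Nat.cast_zero, zero_add]
    linarith
  have hkernel : (fun q : (Fin d → ℝ) × (Fin d → ℝ) => (c ^ 2 + ∑ i, (q.1 i - q.2 i) ^ 2) ^ β)
      ∈ imqKernels c :=
    ⟨imqMonomial c 0 β, imqMonomial_mem_imqSpan hdeg, by funext p; simp [imqMonomial]⟩
  obtain ⟨F, hF, hFk⟩ := mapsTo_mixedDeriv (mapsTo_pderivX_imqKernels hc)
    (mapsTo_pderivY_imqKernels hc) α hkernel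
  obtain ⟨C, hC⟩ := exists_abs_le_of_mem_imqSpan hc hF
  exact ⟨C, fun p => hFk ▸ hC (p.1 - p.2)⟩

/-- all mixed partial derivatives `∂_x^α ∂_y^α` of the inverse
multi-quadric kernel are uniformly bounded. -/
theorem imq_mixed_derivatives_bounded
    {d : ℕ} (c β : ℝ) (hc : 0 < c) (hβ₁ : -1 < β) (hβ₂ : β < 0)
    (α : Fin d → ℕ) :
    ∃ C : ℝ, ∀ p : (Fin d → ℝ) × (Fin d → ℝ),
      |mixedDeriv α (fun q => (c ^ 2 + ∑ i, (q.1 i - q.2 i) ^ 2) ^ β) p| ≤ C :=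
  imq_mixed_derivatives_bounded_general c β hc hβ₂ α
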